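/- The digraph Q = TT_3[{u}, \overline{K}_{n-2}, {v}] (obtained from the transitive tournament on three vertices a→b, b→c, a→c by substituting the single vertex u for a, an independent set of n−2 ≥ 1 vertices for b, and the single vertex v for c) has no good (u,v)-pair. The same holds if the arc vu is added. -/

import Mathlib

/-- Two arc sets (relations) are arc-disjoint. -/
def ArcDisjoint {V : Type*} (B₁ B₂ : V → V → Prop) : Prop := ∀ x y, ¬ (B₁ x y ∧ B₂ x y)

/-- `B` is (the arc set of) an out-branching of the digraph with arc relation `A`,
rooted at `u`: a spanning oriented tree in which every vertex except `u` has
in-degree one and every vertex is reachable from `u`. -/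
def IsOutBranching {V : Type*} (A B : V → V → Prop) (u : V) : Prop :=
  (∀ x y, B x y → A x y) ∧ (∀ w, w ≠ u → ∃! x, B x w) ∧ (∀ x, ¬ B x u) ∧
    (∀ w, Relation.ReflTransGen B u w)

/-- `B` is an in-branching of `A` rooted at `v`. -/
def IsInBranching {V : Type*} (A B : V → V → Prop) (v : V) : Prop :=
  (∀ x y, B x y → A x y) ∧ (∀ w, w ≠ v → ∃! y, B w y) ∧ (∀ y, ¬ B v y) ∧
    (∀ w, Relation.ReflTransGen B w v)

/-- A good `(u,v)`-pair: an arc-disjoint pair of an out-branching rooted at `u`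
and an in-branching rooted at `v`. -/
def GoodPair {V : Type*} (A : V → V → Prop) (u v : V) : Prop :=
  ∃ B₁ B₂, IsOutBranching A B₁ u ∧ IsInBranching A B₂ v ∧ ArcDisjoint B₁ B₂

/-- A digraph is strong if every vertex can reach every other vertex. -/
def IsStrong {V : Type*} (A : V → V → Prop) : Prop := ∀ x y, Relation.ReflTransGen A x y

/-- `k`-arc-strong: removing any set of fewer than `k` arcs leaves a strong digraph. -/
def IsKArcStrong {V : Type*} (A : V → V → Prop) (k : ℕ) : Prop :=
  ∀ F : Set (V × V), F.Finite → F.ncard < k →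
    IsStrong fun x y => A x y ∧ (x, y) ∉ F

/-- The composition `D[H₁,…,Hₙ]` of a digraph `D` on index type `ι` with digraphs
`H i` on types `β i`: vertices are `Σ i, β i`; arcs are the internal arcs of each
`H i` together with all arcs from `β i` to `β j` whenever `D i j` and `i ≠ j`. -/
def Comp {ι : Type*} {β : ι → Type*} (D : ι → ι → Prop) (H : ∀ i, β i → β i → Prop) :
    (Σ i, β i) → (Σ i, β i) → Prop :=
  fun x y => (∃ h : y.1 = x.1, H x.1 x.2 (h ▸ y.2)) ∨ (x.1 ≠ y.1 ∧ D x.1 y.1)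

/-- `TT₃[{u}, K̄ₘ, {v}]`, together with the arc `v → u` iff `c` holds. -/
def Q7 (m : ℕ) (c : Prop) : (Unit ⊕ Fin m ⊕ Unit) → (Unit ⊕ Fin m ⊕ Unit) → Prop
  | Sum.inl _, Sum.inr _ => True
  | Sum.inr (Sum.inl _), Sum.inr (Sum.inr _) => True
  | Sum.inr (Sum.inr _), Sum.inl _ => c
  | _, _ => False

/-!
If every arc leaves `u` or enters `v`, a vertex `w ∉ {u, v}` has `u` as its only in-neighbor and
`v` as its only out-neighbor, so the out-branching contains `uw` and the in-branching contains `wv`.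
The in-branching therefore cannot leave `u` through such a `w` and must use `uv`; but the
out-branching enters `v` from `u` or from some such `w`, and both arcs are already taken.
In `Q7` the only other possible arc is `vu`, which neither branching can use.
-/

section Branching

variable {V : Type*} {A A' B : V → V → Prop} {r w : V}

theorem IsOutBranching.mono (hB : IsOutBranching A B r) (hA : ∀ x y, B x y → A' x y) :
    IsOutBranching A' B r :=
  ⟨hA, hB.2⟩

theorem IsInBranching.mono (hB : IsInBranching A B r) (hA : ∀ x y, B x y → A' x y) :
    IsInBranching A' B r :=
  ⟨hA, hB.2⟩

theorem IsOutBranching.root_arc_of_in_neighbor_eq (hB : IsOutBranching A B r) (hw : w ≠ r)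
    (hin : ∀ x, A x w → x = r) : B r w := by
  obtain ⟨x, hx, -⟩ := hB.2.1 w hw
  rwa [← hin x (hB.1 x w hx)]

theorem IsInBranching.root_arc_of_out_neighbor_eq (hB : IsInBranching A B r) (hw : w ≠ r)
    (hout : ∀ y, A w y → y = r) : B w r := by
  obtain ⟨y, hy, -⟩ := hB.2.1 w hw
  rwa [← hout y (hB.1 w y hy)]

end Branching

section GoodPair

variable {V : Type*} {A : V → V → Prop} {u v : V}

theorem GoodPair.erase_arc (h : GoodPair A u v) :
    GoodPair (fun x y => A x y ∧ ¬(x = v ∧ y = u)) u v := by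
  obtain ⟨B₁, B₂, h₁, h₂, hd⟩ := h
  refine ⟨B₁, B₂, h₁.mono fun x y hxy => ⟨h₁.1 x y hxy, ?_⟩,
    h₂.mono fun x y hxy => ⟨h₂.1 x y hxy, ?_⟩, hd⟩
  · rintro ⟨-, rfl⟩
    exact h₁.2.2.1 x hxy
  · rintro ⟨rfl, -⟩
    exact h₂.2.2.1 y hxy

theorem not_goodPair_of_arcs_from_or_to (huv : u ≠ v) (hloop : ∀ x, ¬A x x)
    (hA : ∀ x y, A x y → x = u ∨ y = v) : ¬GoodPair A u v := by
  rintro ⟨B₁, B₂, h₁, h₂, hd⟩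
  have hB₁ : ∀ w, w ≠ u → w ≠ v → B₁ u w := fun w hwu hwv =>
    h₁.root_arc_of_in_neighbor_eq hwu fun x hx => (hA x w hx).resolve_right hwv
  have hB₂ : ∀ w, w ≠ u → w ≠ v → B₂ w v := fun w hwu hwv =>
    h₂.root_arc_of_out_neighbor_eq hwv fun y hy => (hA w y hy).resolve_left hwu
  have huv₂ : B₂ u v := by
    obtain ⟨y, hy, -⟩ := h₂.2.1 u huv
    have hyu : y ≠ u := by
      rintro rfl
      exact hloop y (h₂.1 y y hy)
    by_cases hyv : y = v
    · rwa [← hyv]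
    · exact (hd u y ⟨hB₁ y hyu hyv, hy⟩).elim
  obtain ⟨x, hx, -⟩ := h₁.2.1 v huv.symm
  have hxv : x ≠ v := by
    rintro rfl
    exact hloop x (h₁.1 x x hx)
  by_cases hxu : x = u
  · subst hxu
    exact hd x v ⟨hx, huv₂⟩
  · exact hd x v ⟨hx, hB₂ x hxu hxv⟩

end GoodPair

theorem Q7_irrefl (m : ℕ) (c : Prop) (x : Unit ⊕ Fin m ⊕ Unit) : ¬Q7 m c x x := by
  rcases x with _ | _ | _ <;> simp [Q7]

theorem Q7_arc_from_u_or_to_v (m : ℕ) (c : Prop) (x y : Unit ⊕ Fin m ⊕ Unit)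
    (h : Q7 m c x y ∧ ¬(x = Sum.inr (Sum.inr ()) ∧ y = Sum.inl ())) :
    x = Sum.inl () ∨ y = Sum.inr (Sum.inr ()) := by
  rcases x with _ | _ | _ <;> rcases y with _ | _ | _ <;> simp_all [Q7]

theorem stmt_7_general (m : ℕ) (c : Prop) :
    ¬ GoodPair (Q7 m c) (Sum.inl ()) (Sum.inr (Sum.inr ())) := fun h =>
  not_goodPair_of_arcs_from_or_to Sum.inl_ne_inr (fun x hx => Q7_irrefl m c x hx.1)
    (Q7_arc_from_u_or_to_v m c) h.erase_arc

/-- `TT₃[{u}, K̄_{n-2}, {v}]` (with or without the extra arc `vu`) has no good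
`(u,v)`-pair. -/
theorem stmt_7 (m : ℕ) (hm : 1 ≤ m) (c : Prop) :
    ¬ GoodPair (Q7 m c) (Sum.inl ()) (Sum.inr (Sum.inr ())) :=
  stmt_7_general m c
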